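/- Let ψ₀ : [x_a, ∞) → [ξ_a, ∞) denote the inverse of the restriction of g(t) = sinh(a·t)·e^{t} to [ξ_a, ∞). Then ψ₀ is strictly increasing and concave on [x_a, ∞). -/

import Mathlib

open Real Set

/-!
Writing `u = a t`, one has `g' t = (a cosh u + sinh u) eᵗ` and
`g'' t = ((1 + a²) sinh u + 2a cosh u) eᵗ`, and `ξ_a = artanh (-a) / a`. For `t > ξ_a` we get
`tanh u > -a`, so `a + tanh u > 0` and `(1 + a²) tanh u + 2a > a (1 - a²) > 0`: the function `g` is
strictly increasing and convex on `[ξ_a, ∞)`. The inverse of a strictly increasing convex function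
is strictly increasing and concave.
-/

theorem StrictMonoOn.strictMonoOn_of_rightInvOn {α β : Type*} [LinearOrder α] [Preorder β]
    {s : Set α} {t : Set β} {f : α → β} {ψ : β → α} (hf : StrictMonoOn f s)
    (hψ : MapsTo ψ t s) (hinv : RightInvOn ψ f t) : StrictMonoOn ψ t := fun x hx y hy hxy =>
  (hf.lt_iff_lt (hψ hx) (hψ hy)).1 (by rwa [hinv hx, hinv hy])

section ConvexInverse

variable {𝕜 α β : Type*} [Semiring 𝕜] [PartialOrder 𝕜]
  [AddCommMonoid α] [LinearOrder α] [Module 𝕜 α] [AddCommMonoid β] [LinearOrder β] [Module 𝕜 β]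
  {s : Set α} {t : Set β} {f : α → β} {ψ : β → α}

theorem ConvexOn.concaveOn_of_rightInvOn (hf : ConvexOn 𝕜 s f) (hmono : StrictMonoOn f s)
    (ht : Convex 𝕜 t) (hψ : MapsTo ψ t s) (hinv : RightInvOn ψ f t) : ConcaveOn 𝕜 t ψ := by
  refine ⟨ht, fun x hx y hy c d hc hd hcd => ?_⟩
  have hz := ht hx hy hc hd hcd
  rw [← hmono.le_iff_le (hf.1 (hψ hx) (hψ hy) hc hd hcd) (hψ hz), hinv hz]
  calc f (c • ψ x + d • ψ y) ≤ c • f (ψ x) + d • f (ψ y) := hf.2 (hψ hx) (hψ hy) hc hd hcd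
    _ = c • x + d • y := by rw [hinv hx, hinv hy]

end ConvexInverse

theorem Real.artanh_lt_iff_lt_tanh {x : ℝ} (hx : x ∈ Ioo (-1) 1) (u : ℝ) :
    artanh x < u ↔ x < tanh u := by
  conv_lhs => rw [← artanh_tanh u]
  exact artanh_lt_artanh_iff hx ⟨neg_one_lt_tanh u, tanh_lt_one u⟩

theorem Real.artanh_neg_eq_half_log {a : ℝ} (ha₀ : -1 ≤ a) (ha₁ : a ≤ 1) :
    artanh (-a) = 1 / 2 * log ((1 - a) / (1 + a)) := by
  rw [artanh_eq_half_log ⟨by linarith, by linarith⟩, ← sub_eq_add_neg, sub_neg_eq_add]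

section SinhMulExp

variable {a : ℝ}

theorem mul_cosh_add_sinh_pos {u : ℝ} (h : -a < tanh u) : 0 < a * cosh u + sinh u := by
  have : a * cosh u + sinh u = cosh u * (a + tanh u) := by
    rw [tanh_eq_sinh_div_cosh]; field_simp
  rw [this]
  exact mul_pos (cosh_pos u) (by linarith)

theorem one_add_sq_mul_sinh_add_pos (ha0 : 0 ≤ a) (ha1 : a ≤ 1) {u : ℝ} (h : -a < tanh u) :
    0 < (1 + a ^ 2) * sinh u + 2 * a * cosh u := by
  have : (1 + a ^ 2) * sinh u + 2 * a * cosh u = cosh u * ((1 + a ^ 2) * tanh u + 2 * a) := by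
    rw [tanh_eq_sinh_div_cosh]; field_simp
  rw [this]
  -- `(1 + a²) tanh u + 2a > 2a - (1 + a²) a = a (1 - a²)`
  exact mul_pos (cosh_pos u) (by nlinarith)

theorem hasDerivAt_sinh_mul_mul_exp (a t : ℝ) :
    HasDerivAt (fun t => sinh (a * t) * exp t) ((a * cosh (a * t) + sinh (a * t)) * exp t) t :=
  ((hasDerivAt_const_mul (x := t) a).sinh.mul (hasDerivAt_exp t)).congr_deriv (by ring)

theorem hasDerivAt_mul_cosh_add_sinh_mul_exp (a t : ℝ) :
    HasDerivAt (fun t => (a * cosh (a * t) + sinh (a * t)) * exp t)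
      (((1 + a ^ 2) * sinh (a * t) + 2 * a * cosh (a * t)) * exp t) t := by
  have hu := hasDerivAt_const_mul (x := t) a
  exact (((hu.cosh.const_mul a).fun_add hu.sinh).mul (hasDerivAt_exp t)).congr_deriv (by ring)

theorem neg_lt_tanh_mul_of_artanh_div_lt (ha0 : 0 < a) (ha1 : a < 1) {t : ℝ}
    (ht : artanh (-a) / a < t) : -a < tanh (a * t) := by
  rwa [div_lt_iff₀' ha0, artanh_lt_iff_lt_tanh ⟨by linarith, by linarith⟩] at ht

theorem strictMonoOn_sinh_mul_mul_exp (ha0 : 0 < a) (ha1 : a < 1) :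
    StrictMonoOn (fun t => sinh (a * t) * exp t) (Ici (artanh (-a) / a)) := by
  refine strictMonoOn_of_hasDerivWithinAt_pos (convex_Ici _) (by fun_prop)
    (fun t _ => (hasDerivAt_sinh_mul_mul_exp a t).hasDerivWithinAt) fun t ht => ?_
  rw [interior_Ici] at ht
  exact mul_pos (mul_cosh_add_sinh_pos (neg_lt_tanh_mul_of_artanh_div_lt ha0 ha1 ht)) (exp_pos t)

theorem convexOn_sinh_mul_mul_exp (ha0 : 0 < a) (ha1 : a < 1) :
    ConvexOn ℝ (Ici (artanh (-a) / a)) (fun t => sinh (a * t) * exp t) := by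
  refine convexOn_of_hasDerivWithinAt2_nonneg (convex_Ici _) (by fun_prop)
    (fun t _ => (hasDerivAt_sinh_mul_mul_exp a t).hasDerivWithinAt)
    (fun t _ => (hasDerivAt_mul_cosh_add_sinh_mul_exp a t).hasDerivWithinAt) fun t ht => ?_
  rw [interior_Ici] at ht
  exact mul_nonneg (one_add_sq_mul_sinh_add_pos ha0.le ha1.le
    (neg_lt_tanh_mul_of_artanh_div_lt ha0 ha1 ht)).le (exp_pos t).le

end SinhMulExp

theorem stmt_9_general (a : ℝ) (ha0 : 0 < a) (ha1 : a < 1)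
    (g : ℝ → ℝ) (hg : ∀ t : ℝ, g t = Real.sinh (a * t) * Real.exp t)
    (ξa : ℝ) (hξa : ξa = (1 / (2 * a)) * Real.log ((1 - a) / (1 + a)))
    (xa : ℝ)
    (ψ : ℝ → ℝ)
    (hmaps : Set.MapsTo ψ (Set.Ici xa) (Set.Ici ξa))
    (hinv : Set.InvOn ψ g (Set.Ici ξa) (Set.Ici xa)) :
    StrictMonoOn ψ (Set.Ici xa) ∧ ConcaveOn ℝ (Set.Ici xa) ψ := by
  have hξ : ξa = artanh (-a) / a := by
    rw [hξa, artanh_neg_eq_half_log (by linarith) ha1.le]; field_simp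
  obtain rfl : g = fun t => sinh (a * t) * exp t := funext hg
  subst hξ
  have hmono := strictMonoOn_sinh_mul_mul_exp ha0 ha1
  exact ⟨hmono.strictMonoOn_of_rightInvOn hmaps hinv.2,
    (convexOn_sinh_mul_mul_exp ha0 ha1).concaveOn_of_rightInvOn hmono (convex_Ici xa) hmaps hinv.2⟩

theorem stmt_9 (a : ℝ) (ha0 : 0 < a) (ha1 : a < 1)
    (g : ℝ → ℝ) (hg : ∀ t : ℝ, g t = Real.sinh (a * t) * Real.exp t)
    (ξa : ℝ) (hξa : ξa = (1 / (2 * a)) * Real.log ((1 - a) / (1 + a)))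
    (xa : ℝ) (hxa : xa = -(a / (1 + a)) * ((1 - a) / (1 + a)) ^ ((1 - a) / (2 * a)))
    (ψ : ℝ → ℝ)
    (hmaps : Set.MapsTo ψ (Set.Ici xa) (Set.Ici ξa))
    (hinv : Set.InvOn ψ g (Set.Ici ξa) (Set.Ici xa)) :
    StrictMonoOn ψ (Set.Ici xa) ∧ ConcaveOn ℝ (Set.Ici xa) ψ :=
  stmt_9_general a ha0 ha1 g hg ξa hξa xa ψ hmaps hinv
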